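/- In the greedy algorithm with supply clipping 1/2 run on all agents and on a subset S: for any agent i ∈ S, letting k and k' be the items agent i buys in the full run and the S-run respectively, for every item j it holds that max{R_j(i,k), 1/2} ≤ max{R_j^S(i,k'), 1/2}, where R_j(i,k) and R_j^S(i,k') denote the remaining fractions of item j at the end of those respective iterations. -/

import Mathlib

open Classical in
/-- One step of the greedy algorithm for unit-demand agents with supply clipping 1/2:
when pair `(i,j)` is processed (and `i` belongs to the active set `S`), if agent `i`
has bought nothing yet and the remaining fraction of item `j` exceeds `1/2`, she buys
`min (remaining) (B i / w i j)` of item `j`. -/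
noncomputable def gstep (n m : ℕ) (w : Fin n → Fin m → ℝ) (B : Fin n → ℝ)
    (S : Finset (Fin n)) (x : Fin n → Fin m → ℝ) (pr : Fin n × Fin m) :
    Fin n → Fin m → ℝ :=
  if pr.1 ∈ S ∧ (∀ j', x pr.1 j' = 0) ∧ 1 / 2 < 1 - ∑ i', x i' pr.2 then
    fun i j =>
      if i = pr.1 ∧ j = pr.2 then
        min (1 - ∑ i', x i' pr.2) (B pr.1 / w pr.1 pr.2)
      else x i j
  else x

/-- The greedy algorithm run on the active agent set `S`, processing the agent-item
pairs in the order given by the list `L` (decreasing weights), starting from the empty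
allocation. -/
noncomputable def grun (n m : ℕ) (w : Fin n → Fin m → ℝ) (B : Fin n → ℝ)
    (S : Finset (Fin n)) (L : List (Fin n × Fin m)) : Fin n → Fin m → ℝ :=
  L.foldl (gstep n m w B S) (fun _ _ => 0)

/-!
Run the greedy algorithm on all agents (allocation `x`) and on `S` (allocation `y`) side by
side. After every prefix of the processing order, (a) every item is at least as available in
`y` as in `x` once availabilities are clipped at `1/2`, and (b) an agent of `S` still idle in `y`
is idle in `x`. One step preserves both: an agent of `S` that buys in the full run is still idle
in the `S`-run and finds the item available there too, and buying maps the availability `R` to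
`max (R - c) 0`, which is monotone in `R`. By (b), once agent `i` has bought `k` in the full run
she has also bought in the `S`-run, so iteration `(i, k')` comes no later than `(i, k)`; as
availability only decreases over time, (a) at iteration `(i, k)` gives the claim.
-/

namespace Greedy

variable {n m : ℕ} {w : Fin n → Fin m → ℝ} {B : Fin n → ℝ} {S : Finset (Fin n)}
  {x y : Fin n → Fin m → ℝ} {pr : Fin n × Fin m}

def remaining (x : Fin n → Fin m → ℝ) (j : Fin m) : ℝ := 1 - ∑ i, x i j

def Idle (x : Fin n → Fin m → ℝ) (a : Fin n) : Prop := ∀ j, x a j = 0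

def Buys (S : Finset (Fin n)) (x : Fin n → Fin m → ℝ) (pr : Fin n × Fin m) : Prop :=
  pr.1 ∈ S ∧ Idle x pr.1 ∧ 1 / 2 < remaining x pr.2

theorem gstep_apply_of_buys (h : Buys S x pr) (i : Fin n) (j : Fin m) :
    gstep n m w B S x pr i j =
      if i = pr.1 ∧ j = pr.2 then min (remaining x pr.2) (B pr.1 / w pr.1 pr.2) else x i j := by
  have h' : pr.1 ∈ S ∧ (∀ j', x pr.1 j' = 0) ∧ 1 / 2 < 1 - ∑ i', x i' pr.2 := h
  rw [gstep, if_pos h']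
  rfl

theorem gstep_of_not_buys (h : ¬ Buys S x pr) : gstep n m w B S x pr = x :=
  if_neg h

theorem grun_append_singleton (P : List (Fin n × Fin m)) (pr : Fin n × Fin m) :
    grun n m w B S (P ++ [pr]) = gstep n m w B S (grun n m w B S P) pr :=
  List.foldl_concat _ _ _ _

theorem purchase_pos (hcap : ∀ i j, 0 < B i / w i j) (h : Buys S x pr) :
    0 < min (remaining x pr.2) (B pr.1 / w pr.1 pr.2) :=
  lt_min (by linarith [h.2.2]) (hcap _ _)

theorem le_gstep (hcap : ∀ i j, 0 < B i / w i j) (x : Fin n → Fin m → ℝ)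
    (pr : Fin n × Fin m) (a : Fin n) (b : Fin m) : x a b ≤ gstep n m w B S x pr a b := by
  by_cases h : Buys S x pr
  · rw [gstep_apply_of_buys h]
    split_ifs with hab
    · rw [hab.1, h.2.1 b]
      exact (purchase_pos hcap h).le
    · exact le_rfl
  · rw [gstep_of_not_buys h]

theorem le_foldl_gstep (hcap : ∀ i j, 0 < B i / w i j) (P : List (Fin n × Fin m))
    (x : Fin n → Fin m → ℝ) (a : Fin n) (b : Fin m) :
    x a b ≤ P.foldl (gstep n m w B S) x a b := by
  induction P generalizing x with
  | nil => exact le_rfl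
  | cons pr P ih => exact (le_gstep hcap x pr a b).trans (ih _)

theorem grun_le_grun_of_prefix (hcap : ∀ i j, 0 < B i / w i j)
    {P Q : List (Fin n × Fin m)} (h : P <+: Q) (a : Fin n) (b : Fin m) :
    grun n m w B S P a b ≤ grun n m w B S Q a b := by
  obtain ⟨T, rfl⟩ := h
  rw [grun, grun, List.foldl_append]
  exact le_foldl_gstep hcap T _ a b

theorem remaining_grun_le_of_prefix (hcap : ∀ i j, 0 < B i / w i j)
    {P Q : List (Fin n × Fin m)} (h : P <+: Q) (j : Fin m) :
    remaining (grun n m w B S Q) j ≤ remaining (grun n m w B S P) j :=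
  sub_le_sub_left (Finset.sum_le_sum fun a _ => grun_le_grun_of_prefix hcap h a j) 1

theorem Idle.of_prefix (hcap : ∀ i j, 0 < B i / w i j) {P Q : List (Fin n × Fin m)}
    (h : P <+: Q) {a : Fin n} (hQ : Idle (grun n m w B S Q) a) : Idle (grun n m w B S P) a :=
  fun j => le_antisymm ((grun_le_grun_of_prefix hcap h a j).trans_eq (hQ j))
    (grun_le_grun_of_prefix hcap (List.nil_prefix (l := P)) a j)

theorem foldl_gstep_of_not_mem {P : List (Fin n × Fin m)} {a : Fin n} {b : Fin m}
    (hab : (a, b) ∉ P) (x : Fin n → Fin m → ℝ) :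
    P.foldl (gstep n m w B S) x a b = x a b := by
  induction P generalizing x with
  | nil => rfl
  | cons pr P ih =>
    rw [List.foldl_cons, ih (fun h => hab (List.mem_cons_of_mem _ h))]
    by_cases h : Buys S x pr
    · rw [gstep_apply_of_buys h, if_neg]
      rintro ⟨rfl, rfl⟩
      exact hab List.mem_cons_self
    · rw [gstep_of_not_buys h]

theorem buys_of_grun_ne_zero {P Q : List (Fin n × Fin m)} {a : Fin n} {b : Fin m}
    (hnd : (P ++ (a, b) :: Q).Nodup) (hpos : grun n m w B S (P ++ (a, b) :: Q) a b ≠ 0) :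
    Buys S (grun n m w B S P) (a, b) := by
  obtain ⟨hP, hQ⟩ : (a, b) ∉ P ∧ (a, b) ∉ Q := by
    simp only [List.nodup_append, List.nodup_cons] at hnd
    exact ⟨fun h => hnd.2.2 _ h _ List.mem_cons_self rfl, hnd.2.1.1⟩
  by_contra hb
  apply hpos
  rw [← List.singleton_append, ← List.append_assoc, grun, List.foldl_append,
    foldl_gstep_of_not_mem hQ, ← grun, grun_append_singleton, gstep_of_not_buys hb, grun,
    foldl_gstep_of_not_mem hP]

theorem sum_gstep_of_buys (h : Buys S x pr) (j : Fin m) :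
    ∑ i, gstep n m w B S x pr i j = ∑ i, x i j +
      if j = pr.2 then min (remaining x pr.2) (B pr.1 / w pr.1 pr.2) else 0 := by
  simp_rw [gstep_apply_of_buys h]
  by_cases hj : j = pr.2
  · subst hj
    rw [← Finset.add_sum_erase _ _ (Finset.mem_univ pr.1),
      ← Finset.add_sum_erase _ _ (Finset.mem_univ pr.1), h.2.1,
      Finset.sum_congr rfl fun i hi => if_neg fun hi' => (Finset.ne_of_mem_erase hi) hi'.1]
    simp [add_comm]
  · simp [hj]

theorem remaining_gstep_of_buys (h : Buys S x pr) :
    remaining (gstep n m w B S x pr) pr.2 = max (remaining x pr.2 - B pr.1 / w pr.1 pr.2) 0 := by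
  rw [remaining, sum_gstep_of_buys h, if_pos rfl, ← sub_sub, ← remaining]
  rcases le_total (remaining x pr.2) (B pr.1 / w pr.1 pr.2) with hc | hc <;> simp [hc]

theorem remaining_gstep_of_ne {j : Fin m} (hj : j ≠ pr.2) :
    remaining (gstep n m w B S x pr) j = remaining x j := by
  by_cases h : Buys S x pr
  · rw [remaining, sum_gstep_of_buys h, if_neg hj, add_zero, remaining]
  · rw [gstep_of_not_buys h]

theorem idle_gstep_iff (hcap : ∀ i j, 0 < B i / w i j) {a : Fin n} :
    Idle (gstep n m w B S x pr) a ↔ Idle x a ∧ ¬ (Buys S x pr ∧ a = pr.1) := by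
  by_cases h : Buys S x pr
  · simp_rw [Idle, gstep_apply_of_buys h]
    by_cases ha : a = pr.1
    · subst ha
      simp only [h, and_self, not_true, and_false, iff_false]
      intro hidle
      exact (purchase_pos hcap h).ne' (by simpa using hidle pr.2)
    · simp [ha]
  · simp [h, gstep_of_not_buys h]

structure Dominates (S : Finset (Fin n)) (x y : Fin n → Fin m → ℝ) : Prop where
  remaining_le : ∀ j, max (remaining x j) (1 / 2) ≤ max (remaining y j) (1 / 2)
  idle_of_idle : ∀ a ∈ S, Idle y a → Idle x a

theorem Dominates.half_lt_remaining (h : Dominates S x y) {j : Fin m}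
    (hx : 1 / 2 < remaining x j) : 1 / 2 < remaining y j := by
  simpa using (lt_max_of_lt_left hx).trans_le (h.remaining_le j)

theorem remaining_gstep_le (hcap : ∀ i j, 0 < B i / w i j) (j : Fin m) :
    remaining (gstep n m w B S x pr) j ≤ remaining x j :=
  sub_le_sub_left (Finset.sum_le_sum fun a _ => le_gstep hcap x pr a j) 1

theorem Dominates.step (hcap : ∀ i j, 0 < B i / w i j) (h : Dominates S x y)
    (pr : Fin n × Fin m) :
    Dominates S (gstep n m w B Finset.univ x pr) (gstep n m w B S y pr) := by
  constructor
  · intro j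
    by_cases hj : j = pr.2
    swap
    · rw [remaining_gstep_of_ne hj, remaining_gstep_of_ne hj]
      exact h.remaining_le j
    subst hj
    by_cases hy : Buys S y pr
    swap
    · rw [gstep_of_not_buys hy]
      exact (max_le_max_right _ (remaining_gstep_le hcap _)).trans (h.remaining_le _)
    by_cases hx : Buys Finset.univ x pr
    · have hxy := h.remaining_le pr.2
      rw [max_eq_left hx.2.2.le, max_eq_left hy.2.2.le] at hxy
      rw [remaining_gstep_of_buys hx, remaining_gstep_of_buys hy]
      exact max_le_max_right _ (max_le_max_right 0 (sub_le_sub_right hxy _))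
    · -- `pr.1` is idle in both runs, so only the clipping can stop the full run from buying
      have hx_le : remaining x pr.2 ≤ 1 / 2 :=
        not_lt.mp fun hlt => hx ⟨Finset.mem_univ _, h.idle_of_idle _ hy.1 hy.2.1, hlt⟩
      rw [gstep_of_not_buys hx, max_eq_right hx_le]
      exact le_max_right _ _
  · intro a ha
    rw [idle_gstep_iff hcap, idle_gstep_iff hcap]
    rintro ⟨hy, hby⟩
    refine ⟨h.idle_of_idle a ha hy, ?_⟩
    rintro ⟨hbx, rfl⟩
    exact hby ⟨⟨ha, hy, h.half_lt_remaining hbx.2.2⟩, rfl⟩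

theorem dominates_grun (hcap : ∀ i j, 0 < B i / w i j) (P : List (Fin n × Fin m)) :
    Dominates S (grun n m w B Finset.univ P) (grun n m w B S P) := by
  induction P using List.reverseRecOn with
  | nil => exact ⟨fun _ => le_rfl, fun _ _ _ _ => rfl⟩
  | append_singleton P pr ih =>
    rw [grun_append_singleton, grun_append_singleton]
    exact ih.step hcap pr

end Greedy

open Greedy in
theorem stmt_5_general (n m : ℕ) (w : Fin n → Fin m → ℝ) (B : Fin n → ℝ)
    (hw : ∀ i j, 0 < w i j) (hB : ∀ i, 0 < B i)
    (L : List (Fin n × Fin m)) (hL2 : L.Nodup)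
    (S : Finset (Fin n)) (i : Fin n) (hi : i ∈ S) (k k' : Fin m)
    (hk : 0 < (grun n m w B Finset.univ L) i k)
    (hk' : 0 < (grun n m w B S L) i k')
    (L1 L2 M1 M2 : List (Fin n × Fin m))
    (hdec : L = L1 ++ (i, k) :: L2)
    (hdec' : L = M1 ++ (i, k') :: M2) :
    ∀ j, max (1 - ∑ i', (grun n m w B Finset.univ (L1 ++ [(i, k)])) i' j) (1 / 2)
      ≤ max (1 - ∑ i', (grun n m w B S (M1 ++ [(i, k')])) i' j) (1 / 2) := by
  have hcap : ∀ i j, 0 < B i / w i j := fun i j => div_pos (hB i) (hw i j)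
  subst hdec
  have hbuys_full := buys_of_grun_ne_zero hL2 hk.ne'
  have hbuys_S := buys_of_grun_ne_zero (hdec' ▸ hL2) (hdec' ▸ hk'.ne')
  have hPL : L1 ++ [(i, k)] <+: L1 ++ (i, k) :: L2 := by simp
  have hQL : M1 ++ [(i, k')] <+: L1 ++ (i, k) :: L2 := by rw [hdec']; simp
  have hM1L : M1 <+: L1 ++ (i, k) :: L2 := by rw [hdec']; simp
  have hQP : M1 ++ [(i, k')] <+: L1 ++ [(i, k)] := by
    refine List.prefix_of_prefix_length_le hQL hPL ?_
    by_contra hlt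
    have hPM1 := List.prefix_of_prefix_length_le hPL hM1L (by simp at hlt ⊢; omega)
    have hbought : ¬ Idle (grun n m w B Finset.univ (L1 ++ [(i, k)])) i := by
      rw [grun_append_singleton, idle_gstep_iff hcap]
      simp [hbuys_full]
    exact hbought ((dominates_grun hcap _).idle_of_idle i hi (hbuys_S.2.1.of_prefix hcap hPM1))
  intro j
  calc _ ≤ max (remaining (grun n m w B S (L1 ++ [(i, k)])) j) (1 / 2) :=
        (dominates_grun hcap _).remaining_le j
    _ ≤ _ := max_le_max_right _ (remaining_grun_le_of_prefix hcap hQP j)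

/-- Key structural lemma for the greedy algorithm with supply clipping 1/2: if agent
`i ∈ S` buys item `k` in the full run and item `k'` in the run on `S` (positions given
by decompositions of the processing order `L`), then for every item `j`,
`max (R_j(i,k)) (1/2) ≤ max (R_j^S(i,k')) (1/2)`, where `R_j(i,k)` (resp.
`R_j^S(i,k')`) is the remaining fraction of item `j` at the end of iteration `(i,k)` of
the full run (resp. iteration `(i,k')` of the `S`-run; iterations of agents outside `S`
are empty in the `S`-run). -/
theorem stmt_5 (n m : ℕ) (w : Fin n → Fin m → ℝ) (B : Fin n → ℝ)
    (hw : ∀ i j, 0 < w i j) (hB : ∀ i, 0 < B i)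
    (L : List (Fin n × Fin m)) (hL1 : ∀ pr : Fin n × Fin m, pr ∈ L) (hL2 : L.Nodup)
    (hL3 : L.Pairwise (fun p q => w q.1 q.2 ≤ w p.1 p.2))
    (S : Finset (Fin n)) (i : Fin n) (hi : i ∈ S) (k k' : Fin m)
    (hk : 0 < (grun n m w B Finset.univ L) i k)
    (hk' : 0 < (grun n m w B S L) i k')
    (L1 L2 M1 M2 : List (Fin n × Fin m))
    (hdec : L = L1 ++ (i, k) :: L2)
    (hdec' : L = M1 ++ (i, k') :: M2) :
    ∀ j, max (1 - ∑ i', (grun n m w B Finset.univ (L1 ++ [(i, k)])) i' j) (1 / 2)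
      ≤ max (1 - ∑ i', (grun n m w B S (M1 ++ [(i, k')])) i' j) (1 / 2) :=
  stmt_5_general n m w B hw hB L hL2 S i hi k k' hk hk' L1 L2 M1 M2 hdec hdec'
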